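/- Two Witt-algebra modules Ω(λ, a) and Ω(λ', a') are isomorphic if and only if λ = λ' and a = a'. -/

import Mathlib

open Polynomial

/-- The action of the Witt basis element `L_α` on `Ω(λ, a) = ℂ[t]`:
`L_α · f(t) = λ^α (t - αa) f(t - α)`. -/
noncomputable def wittL (lam a : ℂ) (α : ℤ) (f : Polynomial ℂ) : Polynomial ℂ :=
  lam ^ α • ((X - C ((α : ℂ) * a)) * f.comp (X - C (α : ℂ)))

/-! `L_0` acts on `Ω(λ, a)` as multiplication by `t`, so a module isomorphism is `ℂ[t]`-linear,
hence multiplication by a unit of `ℂ[t]`, i.e. by a nonzero constant `c`. Comparing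
`L_1 · 1 = λ (t - a)` on both sides, `c` cancels and `λ (t - a) = λ' (t - a')`. -/

namespace Polynomial

theorem LinearMap.apply_eq_mul_apply_one {R : Type*} [CommSemiring R] (φ : R[X] →ₗ[R] R[X])
    (hφ : ∀ f, φ (X * f) = X * φ f) (f : R[X]) : φ f = f * φ 1 := by
  have hpow (n : ℕ) : φ (X ^ n) = X ^ n * φ 1 := by
    induction n with
    | zero => simp
    | succ k ih => rw [pow_succ', hφ, ih, ← mul_assoc, ← pow_succ']
  induction f using Polynomial.induction_on' with
  | add p q hp hq => rw [map_add, hp, hq, add_mul]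
  | monomial n c => rw [← smul_X_eq_monomial, map_smul, hpow, smul_mul_assoc]

theorem LinearEquiv.exists_eq_mul_C {R : Type*} [CommRing R] [IsDomain R] (φ : R[X] ≃ₗ[R] R[X])
    (hφ : ∀ f, φ (X * f) = X * φ f) : ∃ c : R, IsUnit c ∧ ∀ f, φ f = f * C c := by
  have hmul : ∀ f, φ f = f * φ 1 := LinearMap.apply_eq_mul_apply_one φ.toLinearMap hφ
  obtain ⟨g, hg⟩ := φ.surjective 1
  have hunit : IsUnit (φ 1) := .of_mul_eq_one g (by rw [mul_comm, ← hmul g, hg])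
  obtain ⟨c, hc, hcφ⟩ := Polynomial.isUnit_iff.mp hunit
  exact ⟨c, hc, fun f => by rw [hcφ]; exact hmul f⟩

theorem smul_X_sub_C_injective {K : Type*} [Field K] {lam lam' a a' : K} (hlam : lam ≠ 0)
    (h : lam • (X - C a) = lam' • (X - C a')) : lam = lam' ∧ a = a' := by
  have hlead : lam = lam' := by
    simpa [smul_sub, coeff_X_one, coeff_C] using congrArg (coeff · 1) h
  subst hlead
  exact ⟨rfl, C_injective (sub_right_injective (smul_right_injective _ hlam h))⟩

end Polynomial

theorem wittL_zero (lam a : ℂ) (f : ℂ[X]) : wittL lam a 0 f = X * f := by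
  simp [wittL]

theorem wittL_one_one (lam a : ℂ) : wittL lam a 1 1 = lam • (X - C a) := by
  simp [wittL]

theorem wittL_mul_C (lam a : ℂ) (α : ℤ) (f : ℂ[X]) (c : ℂ) :
    wittL lam a α (f * C c) = wittL lam a α f * C c := by
  simp [wittL, mul_comp, mul_assoc]

theorem Omega_iso_iff_general (lam a lam' a' : ℂ) (hlam : lam ≠ 0) :
    (∃ φ : Polynomial ℂ ≃ₗ[ℂ] Polynomial ℂ,
        ∀ (α : ℤ) (f : Polynomial ℂ), φ (wittL lam a α f) = wittL lam' a' α (φ f)) ↔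
      (lam = lam' ∧ a = a') := by
  constructor
  · rintro ⟨φ, hφ⟩
    obtain ⟨c, hc, hφc⟩ := LinearEquiv.exists_eq_mul_C φ fun f => by
      simpa only [wittL_zero] using hφ 0 f
    have key := hφ 1 1
    rw [hφc, hφc, wittL_mul_C, wittL_one_one, wittL_one_one] at key
    exact smul_X_sub_C_injective hlam ((hc.map C).mul_left_inj.mp key)
  · rintro ⟨rfl, rfl⟩
    exact ⟨LinearEquiv.refl ℂ _, fun _ _ => rfl⟩

/-- `Ω(λ, a) ≅ Ω(λ', a')` as Witt-algebra modules iff `λ = λ'` and `a = a'`. -/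
theorem Omega_iso_iff (lam a lam' a' : ℂ) (hlam : lam ≠ 0) (hlam' : lam' ≠ 0) :
    (∃ φ : Polynomial ℂ ≃ₗ[ℂ] Polynomial ℂ,
        ∀ (α : ℤ) (f : Polynomial ℂ), φ (wittL lam a α f) = wittL lam' a' α (φ f)) ↔
      (lam = lam' ∧ a = a') :=
  Omega_iso_iff_general lam a lam' a' hlam
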